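/- Let C be a block lower-triangular column-stochastic matrix of the form ((A,0),(B,D)) with A and D square irreducible nonnegative matrices and B ≠ 0. If x = (y,z) ≥ 0 is a nonzero nonnegative solution of Cx = x, then y = 0. -/
import Mathlib

/-- Irreducibility of a nonnegative square matrix. -/
def MatIrreducible {n : Type*} [Fintype n] [DecidableEq n]
    (C : Matrix n n ℝ) : Prop :=
  ∀ i j, ∃ k > 0, 0 < (C ^ k) i j

lemma pow_entry_nonneg {n : Type*} [Fintype n] [DecidableEq n]
    (A : Matrix n n ℝ) (h : ∀ i j, 0 ≤ A i j) (K : ℕ) (hK : 0 < K) :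
    ∀ i j, 0 ≤ (A ^ K) i j := by
  induction K with
  | zero => omega
  | succ K ih =>
    intro i j
    rcases Nat.eq_zero_or_pos K with hK0 | hKp
    · subst hK0; simpa using h i j
    · rw [pow_succ, Matrix.mul_apply]
      exact Finset.sum_nonneg fun l _ => mul_nonneg (ih hKp i l) (h l j)

lemma pow_mulVec_fixed {n : Type*} [Fintype n] [DecidableEq n]
    (A : Matrix n n ℝ) (y : n → ℝ) (h : A.mulVec y = y) (K : ℕ) :
    (A ^ K).mulVec y = y := by
  induction K with
  | zero => simp
  | succ K ih =>
    rw [pow_succ', ← Matrix.mulVec_mulVec, ih, h]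

/-- For a block lower-triangular column-stochastic matrix ((A,0),(B,D)) with
A, D irreducible and B ≠ 0, any nonzero nonnegative fixed vector (y,z) has
y = 0. -/
theorem block_column_stochastic_fixed_vector_top_zero (m k : ℕ)
    (A : Matrix (Fin m) (Fin m) ℝ) (B : Matrix (Fin k) (Fin m) ℝ)
    (D : Matrix (Fin k) (Fin k) ℝ)
    (C : Matrix (Fin m ⊕ Fin k) (Fin m ⊕ Fin k) ℝ)
    (hC : C = Matrix.fromBlocks A 0 B D)
    (hnonneg : ∀ i j, 0 ≤ C i j)
    (hcol : ∀ j, ∑ i, C i j = 1)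
    (hA : MatIrreducible A) (hD : MatIrreducible D) (hB : B ≠ 0)
    (y : Fin m → ℝ) (z : Fin k → ℝ)
    (x : Fin m ⊕ Fin k → ℝ) (hx : x = Sum.elim y z)
    (hxnonneg : ∀ i, 0 ≤ x i) (hx0 : x ≠ 0)
    (hfix : C.mulVec x = x) :
    y = 0 := by
  subst hC hx
  -- basic nonnegativity facts
  have hAnn : ∀ i j, 0 ≤ A i j := fun i j => by
    simpa using hnonneg (Sum.inl i) (Sum.inl j)
  have hBnn : ∀ i j, 0 ≤ B i j := fun i j => by
    simpa using hnonneg (Sum.inr i) (Sum.inl j)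
  have hynn : ∀ i, 0 ≤ y i := fun i => hxnonneg (Sum.inl i)
  -- A y = y
  have hAy : A.mulVec y = y := by
    funext i
    have := congrFun hfix (Sum.inl i)
    simpa [Matrix.mulVec, dotProduct, Fintype.sum_sum_type] using this
  -- column of A sums
  have hcolA : ∀ j, ∑ i, A i j = 1 - ∑ i, B i j := by
    intro j
    have := hcol (Sum.inl j)
    rw [Fintype.sum_sum_type] at this
    simp only [Matrix.fromBlocks_apply₁₁, Matrix.fromBlocks_apply₂₁] at this
    linarith
  have hcolAle : ∀ j, ∑ i, A i j ≤ 1 := fun j => by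
    have := Finset.sum_nonneg fun i (_ : i ∈ Finset.univ) => hBnn i j
    rw [hcolA j]; linarith
  -- find the deficient column q
  obtain ⟨p, q, hpq⟩ : ∃ p q, 0 < B p q := by
    by_contra h
    push_neg at h
    apply hB
    ext p q
    exact le_antisymm (h p q) (hBnn p q)
  have hq : ∑ i, A i q < 1 := by
    have h1 : B p q ≤ ∑ i, B i q :=
      Finset.single_le_sum (fun i _ => hBnn i q) (Finset.mem_univ p)
    rw [hcolA q]; linarith
  -- suppose y ≠ 0
  by_contra hy0
  obtain ⟨j1, hj1⟩ : ∃ j1, 0 < y j1 := by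
    by_contra h
    push_neg at h
    apply hy0
    ext i
    exact le_antisymm (h i) (hynn i)
  -- irreducibility gives y q > 0
  obtain ⟨K, hKpos, hKe⟩ := hA q j1
  have hyq : 0 < y q := by
    have hfixK := congrFun (pow_mulVec_fixed A y hAy K) q
    rw [Matrix.mulVec, dotProduct] at hfixK
    have hterm : (A ^ K) q j1 * y j1 ≤ ∑ j, (A ^ K) q j * y j :=
      Finset.single_le_sum
        (fun j _ => mul_nonneg (pow_entry_nonneg A hAnn K hKpos q j) (hynn j))
        (Finset.mem_univ j1)
    have := mul_pos hKe hj1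
    linarith [hfixK ▸ hterm]
  -- sum contradiction: ∑ y = ∑_j (colsum_j) y_j < ∑ y
  have hsum : ∑ i, y i = ∑ j, (∑ i, A i j) * y j := by
    calc ∑ i, y i = ∑ i, A.mulVec y i := by rw [hAy]
      _ = ∑ i, ∑ j, A i j * y j := rfl
      _ = ∑ j, ∑ i, A i j * y j := Finset.sum_comm
      _ = ∑ j, (∑ i, A i j) * y j := by simp [Finset.sum_mul]
  have hlt : ∑ j, (∑ i, A i j) * y j < ∑ j, y j := by
    apply Finset.sum_lt_sum (fun j _ => by
      nlinarith [hcolAle j, hynn j])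
    exact ⟨q, Finset.mem_univ q, by nlinarith⟩
  linarith
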